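/- Let q be a prime number with q ≥ 2 and l an integer with l ≥ q, and let B = B(q,l). Then every eigenvalue μ of the real matrix B Bᵀ with μ ≠ ql satisfies μ ≤ (√(l−1) + √(q−1))². Consequently B is the biadjacency matrix of a Ramanujan bigraph with degrees (l,q): every singular value of B other than the largest one √(ql) is at most √(l−1) + √(q−1). -/

import Mathlib

/-!
Read the row `(i, s)` of `B(q,l)` as the point `(i, s)` of the affine plane `𝔽_q²` and the
column `(j, c)` as the line `{(x, c + x j)}`: the entry is `1` exactly on incidence. Since `B` is
biregular, the all-ones vector is an eigenvector of `BBᵀ` for `ql`, so every other eigenvector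
`v` sums to zero, and its eigenvalue is `‖Bᵀv‖² / ‖v‖²`. Counting how many non-vertical lines
pass through two given points gives `∑_L (∑_{p ∈ L} v p)² = (∑ v)² + q‖v‖² - ∑ᵢ (∑ₛ v(i,s))²`,
which is at most `q‖v‖²` when `∑ v = 0`. Every slope occurs at most `⌊l/q⌋ + 1` times among the
`l` block-columns, hence `μ ≤ (⌊l/q⌋ + 1) q ≤ l + q ≤ (√(l-1) + √(q-1))²`.
-/

open Matrix Polynomial

/-- The `q × q` cyclic-shift permutation matrix over `ℝ`:
`P i j = 1` iff `j ≡ i - 1 (mod q)`. -/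
def cyclicShift (q : ℕ) : Matrix (Fin q) (Fin q) ℝ :=
  Matrix.of fun i j => if (j : ZMod q) = (i : ZMod q) - 1 then 1 else 0

/-- The `q² × lq` array-code matrix `B(q,l)`, with `q` block-rows and `l` block-columns
of `q × q` blocks, whose `(i,j)` block (`0`-indexed) is `P^(i*j)`. -/
def arrayB (q l : ℕ) : Matrix (Fin q × Fin q) (Fin l × Fin q) ℝ :=
  Matrix.of fun r c => (cyclicShift q ^ ((r.1 : ℕ) * (c.1 : ℕ))) r.2 c.2

open Finset

section AffinePlane

variable {F : Type*} [CommRing F] [Fintype F]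

def lineSum (w : F × F → ℝ) (t c : F) : ℝ := ∑ i, w (i, c + i * t)

lemma sum_line_mul_line_self (f g : F → ℝ) (a : F) :
    ∑ p : F × F, f (p.2 + a * p.1) * g (p.2 + a * p.1) = Fintype.card F * ∑ x, f x * g x := by
  rw [Fintype.sum_prod_type]
  calc _ = ∑ _t : F, ∑ x, f x * g x :=
        sum_congr rfl fun t _ => Equiv.sum_comp (Equiv.addRight (a * t)) fun x => f x * g x
    _ = _ := by rw [sum_const, card_univ, nsmul_eq_mul]

variable [IsDomain F]

lemma bijective_lineValues_of_ne {a b : F} (hab : a ≠ b) :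
    Function.Bijective fun p : F × F => (p.2 + a * p.1, p.2 + b * p.1) := by
  refine Finite.injective_iff_bijective.mp fun ⟨t, c⟩ ⟨t', c'⟩ h => ?_
  obtain ⟨ha, hb⟩ := Prod.ext_iff.mp h
  have ht : t = t' := by
    have : (a - b) * (t - t') = 0 := by linear_combination ha - hb
    simpa [sub_eq_zero, hab] using this
  subst ht
  simp_all

lemma sum_line_mul_line_of_ne (f g : F → ℝ) {a b : F} (hab : a ≠ b) :
    ∑ p : F × F, f (p.2 + a * p.1) * g (p.2 + b * p.1) = (∑ x, f x) * ∑ y, g y := by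
  rw [Fintype.sum_mul_sum, ← Fintype.sum_prod_type']
  exact (bijective_lineValues_of_ne hab).sum_comp fun p => f p.1 * g p.2

theorem sum_sq_lineSum_add_sum_sq_rowSum (w : F × F → ℝ) :
    ∑ t, ∑ c, lineSum w t c ^ 2 + ∑ i, (∑ s, w (i, s)) ^ 2
      = (∑ p, w p) ^ 2 + Fintype.card F * ∑ p, w p ^ 2 := by
  classical
  set R : F → ℝ := fun i => ∑ s, w (i, s)
  have cross : ∀ i j, ∑ p : F × F, w (i, p.2 + i * p.1) * w (j, p.2 + j * p.1)
      = R i * R j + if i = j then Fintype.card F * ∑ s, w (i, s) ^ 2 - R i ^ 2 else 0 := by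
    intro i j
    split_ifs with h
    · subst h
      rw [sum_line_mul_line_self (fun s => w (i, s)) (fun s => w (i, s))]
      simp only [sq]; ring
    · rw [sum_line_mul_line_of_ne (fun s => w (i, s)) (fun s => w (j, s)) h, add_zero]
  calc ∑ t, ∑ c, lineSum w t c ^ 2 + ∑ i, R i ^ 2
      = ∑ i, ∑ j, ∑ p : F × F, w (i, p.2 + i * p.1) * w (j, p.2 + j * p.1) + ∑ i, R i ^ 2 := by
        rw [← Fintype.sum_prod_type' fun t c => lineSum w t c ^ 2]
        simp only [lineSum, sq, sum_mul_sum]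
        rw [sum_comm]
        exact congrArg (· + _) (sum_congr rfl fun i _ => sum_comm)
    _ = (∑ i, R i) ^ 2 + Fintype.card F * ∑ p, w p ^ 2 := by
        simp only [cross, sum_add_distrib, sum_ite_eq, mem_univ, if_true, sum_sub_distrib,
          ← mul_sum, sq, sum_mul_sum]
        rw [Fintype.sum_prod_type (fun p => w p * w p)]
        ring
    _ = (∑ p, w p) ^ 2 + Fintype.card F * ∑ p, w p ^ 2 := by
        rw [Fintype.sum_prod_type w]

theorem sum_sq_lineSum_le (w : F × F → ℝ) (hw : ∑ p, w p = 0) :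
    ∑ t, ∑ c, lineSum w t c ^ 2 ≤ Fintype.card F * ∑ p, w p ^ 2 := by
  have := sum_sq_lineSum_add_sum_sq_rowSum w
  rw [hw] at this
  have : 0 ≤ ∑ i, (∑ s, w (i, s)) ^ 2 := by positivity
  linarith

end AffinePlane

theorem le_of_hasEigenvalue_mul_transpose {m n : Type*} [Fintype m] [Fintype n] [DecidableEq m]
    (A : Matrix m n ℝ) {r c K μ : ℝ} (hrow : ∀ i, ∑ j, A i j = r) (hcol : ∀ j, ∑ i, A i j = c)
    (hK : ∀ v : m → ℝ, ∑ i, v i = 0 → (Aᵀ *ᵥ v) ⬝ᵥ (Aᵀ *ᵥ v) ≤ K * (v ⬝ᵥ v))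
    (hμ : Module.End.HasEigenvalue (toLin' (A * Aᵀ)) μ) (hne : μ ≠ r * c) : μ ≤ K := by
  obtain ⟨v, hv⟩ := hμ.exists_hasEigenvector
  have hAv : (A * Aᵀ) *ᵥ v = μ • v := by rw [← toLin'_apply]; exact hv.apply_eq_smul
  have hA1 : A *ᵥ 1 = r • 1 := by ext i; simp [mulVec, dotProduct, hrow]
  have h1A : 1 ᵥ* A = c • 1 := by ext j; simp [vecMul, dotProduct, hcol]
  have hsum : ∑ i, v i = 0 := by
    have : μ * (1 ⬝ᵥ v) = r * c * (1 ⬝ᵥ v) := by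
      rw [← smul_eq_mul, ← dotProduct_smul, ← hAv, dotProduct_mulVec, ← vecMul_vecMul, h1A,
        vecMul_transpose, mulVec_smul, hA1, smul_smul, smul_dotProduct, mul_comm c, smul_eq_mul]
    rw [← one_dotProduct]
    exact (mul_eq_mul_right_iff.mp this).resolve_left hne
  have hpos : 0 < v ⬝ᵥ v :=
    (Fintype.sum_nonneg fun i => mul_self_nonneg (v i)).lt_of_ne'
      (dotProduct_self_eq_zero.not.mpr hv.2)
  have : μ * (v ⬝ᵥ v) ≤ K * (v ⬝ᵥ v) :=
    calc μ * (v ⬝ᵥ v) = (Aᵀ *ᵥ v) ⬝ᵥ (Aᵀ *ᵥ v) := by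
          rw [← smul_eq_mul, ← dotProduct_smul, ← hAv, ← mulVec_mulVec, dotProduct_mulVec,
            mulVec_transpose]
      _ ≤ K * (v ⬝ᵥ v) := hK v hsum
  exact le_of_mul_le_mul_right this hpos

lemma add_le_sqrt_sub_one_add_sqrt_sub_one_sq {a b : ℝ} (ha : 2 ≤ a) (hb : 2 ≤ b) :
    a + b ≤ (√(a - 1) + √(b - 1)) ^ 2 := by
  have hprod : 1 ≤ √(a - 1) * √(b - 1) := by
    rw [← Real.sqrt_mul (by linarith)]
    exact Real.one_le_sqrt.mpr (by nlinarith)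
  rw [add_sq, Real.sq_sqrt (by linarith), Real.sq_sqrt (by linarith)]
  linarith

lemma card_filter_natCast_eq_le (q l : ℕ) (t : ZMod q) :
    #{j : Fin l | (j : ZMod q) = t} ≤ l / q + 1 := by
  have hinj : Set.InjOn (fun j : Fin l => (j : ℕ) / q) {j : Fin l | (j : ZMod q) = t} := by
    intro j₁ h₁ j₂ h₂ (hdiv : (j₁ : ℕ) / q = (j₂ : ℕ) / q)
    have hmod : (j₁ : ℕ) % q = (j₂ : ℕ) % q :=
      (ZMod.natCast_eq_natCast_iff' _ _ _).mp (h₁.trans h₂.symm)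
    exact Fin.ext (by rw [← Nat.div_add_mod j₁ q, ← Nat.div_add_mod j₂ q, hdiv, hmod])
  simpa using card_le_card_of_injOn (t := range (l / q + 1)) _
    (fun j _ => mem_range.mpr (Nat.lt_succ_of_le (Nat.div_le_div_right j.isLt.le)))
    (by simpa using hinj)

lemma ZMod.finEquiv_apply {q : ℕ} [NeZero q] (i : Fin q) : ZMod.finEquiv q i = (i : ZMod q) := by
  cases q with
  | zero => exact absurd rfl (NeZero.ne 0)
  | succ n => exact (Fin.cast_val_eq_self i).symm

section ArrayCode

variable {q : ℕ} [NeZero q]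

lemma sum_fin_comp_natCast {M : Type*} [AddCommMonoid M] (f : ZMod q → M) :
    ∑ i : Fin q, f i = ∑ x, f x := by
  simp only [← ZMod.finEquiv_apply]
  exact (ZMod.finEquiv q).bijective.sum_comp f

lemma sum_fin_ite_natCast_eq {M : Type*} [AddCommMonoid M] (x : ZMod q) (f : ZMod q → M) :
    ∑ i : Fin q, (if (i : ZMod q) = x then f i else 0) = f x := by
  rw [sum_fin_comp_natCast fun y => if y = x then f y else 0, Fintype.sum_ite_eq']

lemma cyclicShift_pow_apply (k : ℕ) (s c : Fin q) :
    (cyclicShift q ^ k) s c = if (c : ZMod q) = s - k then 1 else 0 := by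
  induction k generalizing c with
  | zero =>
    simp only [pow_zero, one_apply, Nat.cast_zero, sub_zero, ← ZMod.finEquiv_apply,
      (ZMod.finEquiv q).injective.eq_iff, eq_comm]
  | succ k ih =>
    simp only [pow_succ, mul_apply, ih]
    simp only [cyclicShift, of_apply, ite_mul, one_mul, zero_mul]
    rw [sum_fin_ite_natCast_eq _ fun x => if (c : ZMod q) = x - 1 then 1 else 0]
    simp only [Nat.cast_succ, sub_sub]

lemma sum_fin_prod_comp_natCast {M : Type*} [AddCommMonoid M] (f : ZMod q × ZMod q → M) :
    ∑ p : Fin q × Fin q, f (p.1, p.2) = ∑ p, f p := by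
  rw [Fintype.sum_prod_type, Fintype.sum_prod_type, ← sum_fin_comp_natCast fun x => ∑ y, f (x, y)]
  exact sum_congr rfl fun i _ => sum_fin_comp_natCast fun y => f (i, y)

lemma sum_fin_natCast_le (l : ℕ) {f : ZMod q → ℝ} (hf : ∀ t, 0 ≤ f t) :
    ∑ j : Fin l, f j ≤ (l / q + 1 : ℕ) * ∑ t, f t := by
  rw [← sum_fiberwise_of_maps_to' (g := fun j : Fin l => (j : ZMod q))
    (t := univ) (fun _ _ => mem_univ _), mul_sum]
  gcongr with t
  rw [sum_const, nsmul_eq_mul]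
  gcongr
  · exact hf t
  · exact_mod_cast card_filter_natCast_eq_le q l t

lemma arrayB_apply (l : ℕ) (i s : Fin q) (j : Fin l) (c : Fin q) :
    arrayB q l (i, s) (j, c) = if (s : ZMod q) = c + i * j then 1 else 0 := by
  rw [arrayB, of_apply, cyclicShift_pow_apply, Nat.cast_mul]
  exact if_congr (eq_sub_iff_add_eq.trans eq_comm) rfl rfl

lemma arrayB_rowSum (l : ℕ) (i s : Fin q) : ∑ c, arrayB q l (i, s) c = l := by
  have hblock : ∀ j : Fin l, ∑ c : Fin q, arrayB q l (i, s) (j, c) = 1 := fun j => by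
    simp only [arrayB_apply, eq_comm (a := (s : ZMod q)), ← eq_sub_iff_add_eq]
    exact sum_fin_ite_natCast_eq _ fun _ => 1
  simp [Fintype.sum_prod_type, hblock]

lemma arrayB_colSum (l : ℕ) (j : Fin l) (c : Fin q) : ∑ r, arrayB q l r (j, c) = q := by
  have hblock : ∀ i : Fin q, ∑ s : Fin q, arrayB q l (i, s) (j, c) = 1 := fun i => by
    simp only [arrayB_apply]
    exact sum_fin_ite_natCast_eq _ fun _ => 1
  simp [Fintype.sum_prod_type, hblock]

lemma arrayB_transpose_mulVec_apply (l : ℕ) (w : ZMod q × ZMod q → ℝ) (j : Fin l) (c : Fin q) :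
    ((arrayB q l)ᵀ *ᵥ fun p => w (p.1, p.2)) (j, c) = lineSum w j c := by
  have hblock : ∀ i : Fin q, ∑ s : Fin q, arrayB q l (i, s) (j, c) * w (i, s)
      = w (i, c + i * j) := fun i => by
    simp only [arrayB_apply, ite_mul, one_mul, zero_mul]
    exact sum_fin_ite_natCast_eq _ fun y => w (i, y)
  simp only [mulVec, dotProduct, transpose_apply, Fintype.sum_prod_type, hblock]
  exact sum_fin_comp_natCast fun x => w (x, c + x * j)

theorem arrayB_transpose_mulVec_dotProduct_le [Fact q.Prime] (l : ℕ) (v : Fin q × Fin q → ℝ)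
    (hv : ∑ p, v p = 0) :
    ((arrayB q l)ᵀ *ᵥ v) ⬝ᵥ ((arrayB q l)ᵀ *ᵥ v) ≤ ((l / q + 1 : ℕ) * q : ℝ) * (v ⬝ᵥ v) := by
  set w : ZMod q × ZMod q → ℝ := fun p => v ((ZMod.finEquiv q).symm p.1, (ZMod.finEquiv q).symm p.2)
  have hvw : v = fun p => w (p.1, p.2) := by
    ext p
    simp [w, ← ZMod.finEquiv_apply]
  have hw : ∑ p, w p = 0 := by rw [← sum_fin_prod_comp_natCast, ← hv, hvw]
  calc ((arrayB q l)ᵀ *ᵥ v) ⬝ᵥ ((arrayB q l)ᵀ *ᵥ v) = ∑ j : Fin l, ∑ c, lineSum w j c ^ 2 := by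
        rw [hvw]
        simp only [dotProduct, Fintype.sum_prod_type, arrayB_transpose_mulVec_apply, ← sq]
        exact sum_congr rfl fun j _ => sum_fin_comp_natCast fun c => lineSum w j c ^ 2
    _ ≤ (l / q + 1 : ℕ) * ∑ t, ∑ c, lineSum w t c ^ 2 :=
        sum_fin_natCast_le l fun t => sum_nonneg fun c _ => sq_nonneg _
    _ ≤ (l / q + 1 : ℕ) * (q * ∑ p, w p ^ 2) := by
        gcongr
        simpa using sum_sq_lineSum_le w hw
    _ = ((l / q + 1 : ℕ) * q : ℝ) * (v ⬝ᵥ v) := by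
        rw [mul_assoc, ← sum_fin_prod_comp_natCast fun p => w p ^ 2, hvw]
        simp only [dotProduct, sq]

end ArrayCode

theorem arrayB_ramanujan_of_ge_general (q l : ℕ) (hq : q.Prime) (hql : q ≤ l) :
    (∀ μ : ℝ, Module.End.HasEigenvalue (Matrix.toLin' (arrayB q l * (arrayB q l)ᵀ)) μ →
      μ ≠ (q : ℝ) * l → μ ≤ (Real.sqrt ((l : ℝ) - 1) + Real.sqrt ((q : ℝ) - 1)) ^ 2) ∧
    (∀ s : ℝ, 0 ≤ s →
      Module.End.HasEigenvalue (Matrix.toLin' (arrayB q l * (arrayB q l)ᵀ)) (s ^ 2) →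
      s ≠ Real.sqrt ((q : ℝ) * l) →
      s ≤ Real.sqrt ((l : ℝ) - 1) + Real.sqrt ((q : ℝ) - 1)) := by
  have : Fact q.Prime := ⟨hq⟩
  have hq2 : (2 : ℝ) ≤ q := by exact_mod_cast hq.two_le
  have hl2 : (2 : ℝ) ≤ l := hq2.trans (by exact_mod_cast hql)
  have hbound : ((l / q + 1 : ℕ) * q : ℝ) ≤ (√(l - 1) + √(q - 1)) ^ 2 := by
    calc ((l / q + 1 : ℕ) * q : ℝ) ≤ l + q := by
          exact_mod_cast (add_one_mul (l / q) q).trans_le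
            (Nat.add_le_add_right (Nat.div_mul_le_self l q) q)
      _ ≤ (√(l - 1) + √(q - 1)) ^ 2 := add_le_sqrt_sub_one_add_sqrt_sub_one_sq hl2 hq2
  have heig : ∀ μ : ℝ, Module.End.HasEigenvalue (toLin' (arrayB q l * (arrayB q l)ᵀ)) μ →
      μ ≠ q * l → μ ≤ (√(l - 1) + √(q - 1)) ^ 2 := fun μ hμ hne =>
    (le_of_hasEigenvalue_mul_transpose _ (fun ⟨i, s⟩ => arrayB_rowSum l i s)
      (fun ⟨j, c⟩ => arrayB_colSum l j c) (arrayB_transpose_mulVec_dotProduct_le l) hμ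
      (by rwa [mul_comm])).trans hbound
  refine ⟨heig, fun s hs hs2 hne => ?_⟩
  have hne2 : s ^ 2 ≠ q * l := fun h => hne (by rw [← h, Real.sqrt_sq hs])
  exact (pow_le_pow_iff_left₀ hs (by positivity) two_ne_zero).mp (heig _ hs2 hne2)

/-- Every eigenvalue of `BBᵀ` other than `ql` is at most `(√(l-1) + √(q-1))²`;
consequently every singular value of `B` other than `√(ql)` is at most
`√(l-1) + √(q-1)`, i.e. `B` is the biadjacency matrix of an `(l,q)`-biregular
Ramanujan bigraph. -/
theorem arrayB_ramanujan_of_ge (q l : ℕ) (hq : q.Prime) (hq2 : 2 ≤ q) (hql : q ≤ l) :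
    (∀ μ : ℝ, Module.End.HasEigenvalue (Matrix.toLin' (arrayB q l * (arrayB q l)ᵀ)) μ →
      μ ≠ (q : ℝ) * l → μ ≤ (Real.sqrt ((l : ℝ) - 1) + Real.sqrt ((q : ℝ) - 1)) ^ 2) ∧
    (∀ s : ℝ, 0 ≤ s →
      Module.End.HasEigenvalue (Matrix.toLin' (arrayB q l * (arrayB q l)ᵀ)) (s ^ 2) →
      s ≠ Real.sqrt ((q : ℝ) * l) →
      s ≤ Real.sqrt ((l : ℝ) - 1) + Real.sqrt ((q : ℝ) - 1)) :=
  arrayB_ramanujan_of_ge_general q l hq hql
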